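/- Let a < b and α < β be real numbers. Let u be C² on (a,b) and C¹ on [a,b], with u'(a) = 0 and u'(t) > 0 for all t ∈ (a,b). Let v be C² on (α,β) and C¹ on [α,β], with v(α) ≤ u(b), v(β) = u(a), v(β) < v(s) < v(α) for all s ∈ (α,β), and v'(α) = 0. Suppose that whenever u(t) = v(s) for some t ∈ (a,b) and s ∈ (α,β), one has u''(t) ≤ v''(s). Then β − α = b − a and v(s) = u(c − s) for all s ∈ [α,β], where c = b + α = a + β; in particular v(α) = u(b). -/

import Mathlib

/-!
Let `τ = u⁻¹ ∘ v` and let `P y = u'(u⁻¹ y)²` be the squared speed of `u` at level `y`; since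
`dP/dy = 2 u''(u⁻¹ y)`, the energy `E s = v'(s)² - P (v s)` has `E' = v' (2 v'' - 2 u'' ∘ τ)`,
which is `≤ 0` wherever `v' ≤ 0`, and `E β ≥ 0` because `u'(a) = 0`.

A priori `v` need not be monotone, so one first works on the closed set of right records of `v`
(points `s` with `v ≤ v s` on `[s, β]`). There `E` is antitone: across a gap `(L, R)` of records
`v L = v R` and `v'(R) = 0`, so `E R ≤ E L`. Hence `E ≥ 0` at every record, whereas an interior
non-record `s` would produce a record `z > s` maximizing `v` on `[s, β]`, with
`E z = -P (v z) < 0`. So `v` is nonincreasing, `E` is antitone on `[α, β]`, and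
`E α = -P (v α) ≤ 0 ≤ E β` forces `E ≡ 0` and `v α = u b`. Then `v' = -u' ∘ τ`, i.e. `τ' = -1`,
and `τ s = b + α - s`.
-/

open Set Filter Topology Function

theorem IsCompact.continuousOn_invFunOn {X Y : Type*} [TopologicalSpace X] [TopologicalSpace Y]
    [T2Space Y] [Nonempty X] {f : X → Y} {s : Set X} (hs : IsCompact s)
    (hf : ContinuousOn f s) (hinj : InjOn f s) : ContinuousOn (invFunOn f s) (f '' s) := by
  rw [continuousOn_iff_isClosed]
  intro C hC
  refine ⟨f '' (s ∩ C), ((hs.inter_right hC).image_of_continuousOn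
    (hf.mono inter_subset_left)).isClosed, ?_⟩
  ext y
  simp only [mem_inter_iff, mem_preimage, mem_image]
  constructor
  · rintro ⟨hy, x, hx, rfl⟩
    exact ⟨⟨x, ⟨hx, hinj.leftInvOn_invFunOn hx ▸ hy⟩, rfl⟩, x, hx, rfl⟩
  · rintro ⟨⟨x, ⟨hx, hxC⟩, rfl⟩, -⟩
    exact ⟨(hinj.leftInvOn_invFunOn hx).symm ▸ hxC, x, hx, rfl⟩

section Inverse

variable {u : ℝ → ℝ} {a b : ℝ}

theorem StrictMonoOn.bijOn_Icc (hmono : StrictMonoOn u (Icc a b)) (hab : a ≤ b)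
    (hu : ContinuousOn u (Icc a b)) : BijOn u (Icc a b) (Icc (u a) (u b)) := by
  simpa [hu.image_Icc_of_monotoneOn hab hmono.monotoneOn] using hmono.injOn.bijOn_image

theorem StrictMonoOn.continuousOn_invFunOn_Icc (hmono : StrictMonoOn u (Icc a b)) (hab : a ≤ b)
    (hu : ContinuousOn u (Icc a b)) : ContinuousOn (invFunOn u (Icc a b)) (Icc (u a) (u b)) := by
  simpa [hu.image_Icc_of_monotoneOn hab hmono.monotoneOn] using
    isCompact_Icc.continuousOn_invFunOn hu hmono.injOn

theorem StrictMonoOn.mapsTo_invFunOn_Ioo (hmono : StrictMonoOn u (Icc a b)) (hab : a ≤ b)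
    (hu : ContinuousOn u (Icc a b)) :
    MapsTo (invFunOn u (Icc a b)) (Ioo (u a) (u b)) (Ioo a b) := by
  intro y hy
  have hinv := (hmono.bijOn_Icc hab hu).invOn_invFunOn
  have ht := (hmono.bijOn_Icc hab hu).surjOn.mapsTo_invFunOn (Ioo_subset_Icc_self hy)
  have hut := hinv.2 (Ioo_subset_Icc_self hy)
  refine ⟨ht.1.lt_of_ne ?_, ht.2.lt_of_ne ?_⟩ <;> rintro h
  · exact hy.1.ne (by rw [h, hut])
  · exact hy.2.ne (by rw [← h, hut])

theorem StrictMonoOn.hasDerivAt_invFunOn_Icc (hmono : StrictMonoOn u (Icc a b)) (hab : a ≤ b)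
    (hu : ContinuousOn u (Icc a b)) {y u' : ℝ} (hy : y ∈ Ioo (u a) (u b))
    (hd : HasDerivAt u u' (invFunOn u (Icc a b) y)) (hu' : u' ≠ 0) :
    HasDerivAt (invFunOn u (Icc a b)) u'⁻¹ y := by
  refine HasDerivAt.of_local_left_inverse ((hmono.continuousOn_invFunOn_Icc hab hu).continuousAt
    (Icc_mem_nhds hy.1 hy.2)) hd hu' ?_
  filter_upwards [Icc_mem_nhds hy.1 hy.2] with z hz
  exact (hmono.bijOn_Icc hab hu).invOn_invFunOn.2 hz

end Inverse

theorem IsClosed.exists_gap_right {K : Set ℝ} (hK : IsClosed K) {x q : ℝ} (hq : q ∈ K)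
    (hxq : x < q) (hx : x ∉ closure (K ∩ Ioi x)) :
    ∃ R ∈ K, x < R ∧ R ≤ q ∧ Disjoint (Ioo x R) K := by
  set T := K ∩ Ioc x q
  have hT : T.Nonempty := ⟨q, hq, hxq, le_rfl⟩
  have hRT : sInf T ∈ closure T := csInf_mem_closure hT ⟨x, fun z hz => hz.2.1.le⟩
  have hTK : closure T ⊆ K ∩ Icc x q :=
    closure_minimal (inter_subset_inter_right _ Ioc_subset_Icc_self) (hK.inter isClosed_Icc)
  have hRx : sInf T ≠ x := fun h =>
    hx (h ▸ closure_mono (inter_subset_inter_right K Ioc_subset_Ioi_self) hRT :)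
  refine ⟨sInf T, (hTK hRT).1, lt_of_le_of_ne (hTK hRT).2.1 hRx.symm, (hTK hRT).2.2, ?_⟩
  refine Set.disjoint_left.2 fun z hz hzK => hz.2.not_ge ?_
  exact csInf_le ⟨x, fun w hw => hw.2.1.le⟩ ⟨hzK, hz.1, (hz.2.trans_le (hTK hRT).2.2).le⟩

/-- Real induction on `{x ∈ K | F x ≤ F p + ε (x - p)}`: from a point of `K` that is isolated on
the right, `hgap` lets the induction jump to the next point of `K`. -/
theorem IsClosed.antitoneOn_of_hasDerivWithinAt_nonpos {K : Set ℝ} {F : ℝ → ℝ}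
    (hK : IsClosed K) (hF : ContinuousOn F K)
    (hderiv : ∀ x ∈ K, ∃ f' ≤ 0, HasDerivWithinAt F f' (K ∩ Ioi x) x)
    (hgap : ∀ L ∈ K, ∀ R ∈ K, L < R → Disjoint (Ioo L R) K → F R ≤ F L) :
    AntitoneOn F K := by
  intro p hp q hq hpq
  suffices key : ∀ ε > 0, F q ≤ F p + ε * (q - p + 1) by
    refine le_of_forall_pos_le_add fun δ hδ => ?_
    have hpos : 0 < q - p + 1 := by linarith
    simpa [div_mul_cancel₀ δ hpos.ne'] using key (δ / (q - p + 1)) (div_pos hδ hpos)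
  intro ε hε
  set S := {x ∈ K | F x ≤ F p + ε * (x - p)}
  have hS : IsClosed S := hK.isClosed_le hF (by fun_prop)
  have hqS : q ∈ S := by
    refine (hS.inter isClosed_Icc).mem_of_ge_of_forall_exists_gt ⟨hp, by simp⟩ hpq ?_
    rintro x ⟨⟨hxK, hxS⟩, -, hxq⟩
    by_cases hacc : x ∈ closure (K ∩ Ioi x)
    · have := mem_closure_iff_nhdsWithin_neBot.1 hacc
      obtain ⟨f', hf'0, hf'⟩ := hderiv x hxK
      have hslope := hf'.limsup_slope_le' (by simp) (hf'0.trans_lt hε)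
      have hnear : ∀ᶠ z in 𝓝[K ∩ Ioi x] x, z < q :=
        nhdsWithin_le_nhds (eventually_lt_nhds hxq)
      obtain ⟨z, hz, ⟨hzK, hxz⟩, hzq⟩ :=
        (hslope.and (eventually_mem_nhdsWithin.and hnear)).exists
      rw [slope_def_field, div_lt_iff₀ (sub_pos.2 hxz)] at hz
      exact ⟨z, ⟨hzK, by linarith⟩, hxz, hzq.le⟩
    · obtain ⟨R, hRK, hxR, hRq, hdisj⟩ := hK.exists_gap_right hq hxq hacc
      have := hgap x hxK R hRK hxR hdisj
      exact ⟨R, ⟨hRK, by nlinarith⟩, hxR, hRq⟩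
  linarith [hqS.2, mul_nonneg hε.le (sub_nonneg.2 hpq)]

theorem eq_sub_of_hasDerivAt_neg_one {f : ℝ → ℝ} {α β : ℝ} (hf : ContinuousOn f (Icc α β))
    (hd : ∀ s ∈ Ioo α β, HasDerivAt f (-1) s) {s : ℝ} (hs : s ∈ Icc α β) :
    f s = f α + α - s := by
  rcases hs.1.eq_or_lt with rfl | hαs
  · ring
  obtain ⟨c, -, hc⟩ := exists_hasDerivAt_eq_slope f (fun _ => -1) hαs
    (hf.mono (Icc_subset_Icc_right hs.2)) fun x hx => hd x ⟨hx.1, hx.2.trans_le hs.2⟩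
  rw [eq_div_iff (sub_ne_zero.2 hαs.ne')] at hc
  linarith

theorem mapsTo_Icc_of_forall_mem_Ioo {v : ℝ → ℝ} {α β : ℝ} (hαβ : α < β)
    (hv : ∀ s ∈ Ioo α β, v β < v s ∧ v s < v α) : MapsTo v (Icc α β) (Icc (v β) (v α)) := by
  have hβα : v β ≤ v α :=
    (hv ((α + β) / 2) ⟨by linarith, by linarith⟩).elim fun h h' => (h.trans h').le
  intro s hs
  rcases eq_endpoints_or_mem_Ioo_of_mem_Icc hs with rfl | rfl | hs
  exacts [⟨hβα, le_rfl⟩, ⟨le_rfl, hβα⟩, ⟨(hv s hs).1.le, (hv s hs).2.le⟩]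

def records (v : ℝ → ℝ) (α β : ℝ) : Set ℝ := {s ∈ Icc α β | ∀ x ∈ Icc s β, v x ≤ v s}

section Records

variable {v : ℝ → ℝ} {α β : ℝ}

theorem isClosed_records (hv : ContinuousOn v (Icc α β)) : IsClosed (records v α β) := by
  refine isClosed_of_closure_subset fun s hs => ?_
  have hsI : s ∈ Icc α β := closure_minimal (fun _ h => h.1) isClosed_Icc hs
  refine ⟨hsI, fun x hx => ?_⟩
  rcases hx.1.eq_or_lt with rfl | hsx
  · exact le_rfl
  have hs' : s ∈ closure (records v α β ∩ Iio x) := by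
    rw [mem_closure_iff_nhdsWithin_neBot, nhdsWithin_inter_of_mem'
      (mem_nhdsWithin_of_mem_nhds (Iio_mem_nhds hsx))]
    exact mem_closure_iff_nhdsWithin_neBot.1 hs
  refine ContinuousWithinAt.closure_le hs' continuousWithinAt_const
    ((hv s hsI).mono fun r hr => hr.1.1) fun r hr => hr.1.2 x ⟨hr.2.le, hx.2⟩

theorem right_mem_records (hαβ : α ≤ β) : β ∈ records v α β :=
  ⟨right_mem_Icc.2 hαβ, fun _ hx => (congrArg v (le_antisymm hx.2 hx.1)).le⟩

theorem exists_mem_records_isMaxOn (hv : ContinuousOn v (Icc α β)) {s : ℝ}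
    (hs : s ∈ Icc α β) : ∃ z ∈ records v α β, s ≤ z ∧ IsMaxOn v (Icc s β) z := by
  obtain ⟨z, hz, hmax⟩ := isCompact_Icc.exists_isMaxOn (nonempty_Icc.2 hs.2)
    (hv.mono (Icc_subset_Icc_left hs.1))
  exact ⟨z, ⟨⟨hs.1.trans hz.1, hz.2⟩, fun x hx => hmax ⟨hz.1.trans hx.1, hx.2⟩⟩, hz.1, hmax⟩

theorem le_of_mem_Ioo_of_disjoint_records (hv : ContinuousOn v (Icc α β)) {L R s : ℝ}
    (hL : L ∈ records v α β) (hR : R ∈ records v α β)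
    (hgap : Disjoint (Ioo L R) (records v α β)) (hs : s ∈ Ioo L R) : v s ≤ v R := by
  obtain ⟨z, hz, hsz, hmax⟩ :=
    exists_mem_records_isMaxOn hv ⟨hL.1.1.trans hs.1.le, hs.2.le.trans hR.1.2⟩
  have hRz : R ≤ z := not_lt.1 fun hzR => disjoint_left.1 hgap ⟨hs.1.trans_le hsz, hzR⟩ hz
  exact (hmax ⟨le_rfl, hs.2.le.trans hR.1.2⟩).trans (hR.2 z ⟨hRz, hz.1.2⟩)

theorem eq_of_disjoint_records (hv : ContinuousOn v (Icc α β)) {L R : ℝ}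
    (hL : L ∈ records v α β) (hR : R ∈ records v α β) (hLR : L < R)
    (hgap : Disjoint (Ioo L R) (records v α β)) : v L = v R := by
  refine le_antisymm ?_ (hL.2 R ⟨hLR.le, hR.1.2⟩)
  refine ContinuousWithinAt.closure_le (by simp [closure_Ioo hLR.ne, hLR.le])
    ((hv L hL.1).mono fun x hx => ⟨hL.1.1.trans hx.1.le, hx.2.le.trans hR.1.2⟩)
    continuousWithinAt_const fun s hs => le_of_mem_Ioo_of_disjoint_records hv hL hR hgap hs

theorem isLocalMax_of_disjoint_records (hv : ContinuousOn v (Icc α β)) {L R : ℝ}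
    (hL : L ∈ records v α β) (hR : R ∈ records v α β) (hLR : L < R) (hRβ : R < β)
    (hgap : Disjoint (Ioo L R) (records v α β)) : IsLocalMax v R := by
  filter_upwards [Ioo_mem_nhds hLR hRβ] with x hx
  rcases lt_or_ge x R with hxR | hRx
  · exact le_of_mem_Ioo_of_disjoint_records hv hL hR hgap ⟨hx.1, hxR⟩
  · exact hR.2 x ⟨hRx, hx.2.le⟩

theorem deriv_nonpos_of_mem_records (hd : DifferentiableOn ℝ v (Ioo α β)) {s : ℝ}
    (hs : s ∈ Ioo α β) (hrec : s ∈ records v α β) : deriv v s ≤ 0 := by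
  have hslope : Tendsto (slope v s) (𝓝[>] s) (𝓝 (deriv v s)) :=
    (hasDerivWithinAt_iff_tendsto_slope' self_notMem_Ioi).1
      ((hd s hs).differentiableAt (Ioo_mem_nhds hs.1 hs.2)).hasDerivAt.hasDerivWithinAt
  refine le_of_tendsto hslope ?_
  filter_upwards [Ioo_mem_nhdsGT hs.2] with x hx
  rw [slope_def_field]
  exact div_nonpos_of_nonpos_of_nonneg (sub_nonpos.2 (hrec.2 x ⟨hx.1.le, hx.2.le⟩))
    (sub_nonneg.2 hx.1.le)

end Records

noncomputable def energy (v P : ℝ → ℝ) (α β s : ℝ) : ℝ :=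
  derivWithin v (Icc α β) s ^ 2 - P (v s)

section Energy

variable {v P : ℝ → ℝ} {α β : ℝ}

theorem continuousOn_energy (hαβ : α < β) (hv : ContDiffOn ℝ 1 v (Icc α β))
    (hP : ContinuousOn P (v '' Icc α β)) : ContinuousOn (energy v P α β) (Icc α β) :=
  ((hv.continuousOn_derivWithin (uniqueDiffOn_Icc hαβ) le_rfl).pow 2).sub
    (hP.comp hv.continuousOn (mapsTo_image _ _))

theorem hasDerivAt_energy (hv : ContDiffOn ℝ 2 v (Ioo α β)) {s p : ℝ} (hs : s ∈ Ioo α β)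
    (hP : HasDerivAt P p (v s)) :
    HasDerivAt (energy v P α β) (deriv v s * (2 * deriv (deriv v) s - p)) s := by
  have hv' : HasDerivAt v (deriv v s) s :=
    ((hv.differentiableOn (by norm_num) s hs).differentiableAt (Ioo_mem_nhds hs.1 hs.2)).hasDerivAt
  have hv'' : HasDerivAt (deriv v) (deriv (deriv v) s) s :=
    (((hv.deriv_of_isOpen isOpen_Ioo (m := 1) (by norm_num)).differentiableOn one_ne_zero)
      s hs).differentiableAt (Ioo_mem_nhds hs.1 hs.2) |>.hasDerivAt
  have heq : energy v P α β =ᶠ[𝓝 s] fun x => deriv v x ^ 2 - P (v x) := by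
    filter_upwards [Ioo_mem_nhds hs.1 hs.2] with x hx
    rw [energy, derivWithin_of_mem_nhds (Icc_mem_nhds hx.1 hx.2)]
  refine (((hv''.pow 2).sub (hP.comp s hv')).congr_of_eventuallyEq heq).congr_deriv ?_
  norm_num
  ring

theorem antitoneOn_energy_records (hαβ : α < β) (hv1 : ContDiffOn ℝ 1 v (Icc α β))
    (hv2 : ContDiffOn ℝ 2 v (Ioo α β)) (hvβ : ∀ s ∈ Ioo α β, v β < v s)
    (hPc : ContinuousOn P (v '' Icc α β))
    (hP : ∀ s ∈ Ioo α β, ∃ p ≤ 2 * deriv (deriv v) s, HasDerivAt P p (v s))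
    {r : ℝ} (hαr : α < r) :
    AntitoneOn (energy v P α β) (records v α β ∩ Icc r β) := by
  have hvc := hv1.continuousOn
  refine ((isClosed_records hvc).inter isClosed_Icc).antitoneOn_of_hasDerivWithinAt_nonpos
    ((continuousOn_energy hαβ hv1 hPc).mono fun x hx => hx.1.1) ?_ ?_
  · rintro x ⟨hxrec, hxr⟩
    rcases hxr.2.lt_or_eq with hxβ | rfl
    · have hx : x ∈ Ioo α β := ⟨hαr.trans_le hxr.1, hxβ⟩
      obtain ⟨p, hp, hPd⟩ := hP x hx
      have hv' := deriv_nonpos_of_mem_records (hv2.differentiableOn (by norm_num)) hx hxrec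
      exact ⟨_, mul_nonpos_of_nonpos_of_nonneg hv' (by linarith),
        (hasDerivAt_energy hv2 hx hPd).hasDerivWithinAt⟩
    · refine ⟨0, le_rfl, HasFDerivWithinAt.of_notMem_closure ?_⟩
      rw [show records v α x ∩ Icc r x ∩ Ioi x = ∅ from
        eq_empty_of_forall_notMem fun z hz => hz.2.not_ge hz.1.2.2]
      simp
  · rintro L ⟨hL, hLr⟩ R ⟨hR, hRr⟩ hLR hgap
    have hgap' : Disjoint (Ioo L R) (records v α β) := disjoint_left.2 fun z hz hzrec =>
      disjoint_left.1 hgap hz ⟨hzrec, hLr.1.trans hz.1.le, hz.2.le.trans hRr.2⟩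
    have heq := eq_of_disjoint_records hvc hL hR hLR hgap'
    rcases hRr.2.lt_or_eq with hRβ | rfl
    · have hR0 : derivWithin v (Icc α β) R = 0 := by
        rw [derivWithin_of_mem_nhds (Icc_mem_nhds (hαr.trans_le (hLr.1.trans hLR.le)) hRβ)]
        exact (isLocalMax_of_disjoint_records hvc hL hR hLR hRβ hgap').deriv_eq_zero
      simp only [energy, hR0, heq]
      nlinarith [sq_nonneg (derivWithin v (Icc α β) L)]
    · exact absurd heq (hvβ L ⟨hαr.trans_le hLr.1, hLR⟩).ne'

theorem Ioo_subset_records (hαβ : α < β) (hv1 : ContDiffOn ℝ 1 v (Icc α β))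
    (hv2 : ContDiffOn ℝ 2 v (Ioo α β)) (hvβ : ∀ s ∈ Ioo α β, v β < v s)
    (hPc : ContinuousOn P (v '' Icc α β))
    (hP : ∀ s ∈ Ioo α β, ∃ p ≤ 2 * deriv (deriv v) s, HasDerivAt P p (v s))
    (hPpos : ∀ s ∈ Ioo α β, 0 < P (v s)) (hPβ : P (v β) ≤ 0) :
    Ioo α β ⊆ records v α β := by
  intro s hs
  by_contra hsrec
  obtain ⟨z, hz, hsz, hmax⟩ := exists_mem_records_isMaxOn hv1.continuousOn (Ioo_subset_Icc_self hs)
  have hsz' : s < z := hsz.lt_of_ne fun h => hsrec (h ▸ hz)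
  have hzβ : z < β := hz.1.2.lt_of_ne fun h =>
    (hvβ s hs).not_ge (h ▸ hmax ⟨le_rfl, hs.2.le⟩)
  have hzI : z ∈ Ioo α β := ⟨hs.1.trans hsz', hzβ⟩
  have hz0 : derivWithin v (Icc α β) z = 0 := by
    rw [derivWithin_of_mem_nhds (Icc_mem_nhds hzI.1 hzI.2)]
    refine IsLocalMax.deriv_eq_zero ?_
    filter_upwards [Ioo_mem_nhds hsz' hzβ] with x hx using hmax ⟨hx.1.le, hx.2.le⟩
  have hzβE := antitoneOn_energy_records hαβ hv1 hv2 hvβ hPc hP hzI.1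
    ⟨hz, le_rfl, hzβ.le⟩ ⟨right_mem_records hαβ.le, hzβ.le, le_rfl⟩ hzβ.le
  simp only [energy, hz0] at hzβE
  nlinarith [hPpos z hzI, sq_nonneg (derivWithin v (Icc α β) β)]

theorem antitoneOn_energy (hαβ : α < β) (hv1 : ContDiffOn ℝ 1 v (Icc α β))
    (hv2 : ContDiffOn ℝ 2 v (Ioo α β)) (hv' : ∀ s ∈ Ioo α β, deriv v s ≤ 0)
    (hPc : ContinuousOn P (v '' Icc α β))
    (hP : ∀ s ∈ Ioo α β, ∃ p ≤ 2 * deriv (deriv v) s, HasDerivAt P p (v s)) :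
    AntitoneOn (energy v P α β) (Icc α β) := by
  have hd : ∀ s ∈ Ioo α β, ∃ e ≤ 0, HasDerivAt (energy v P α β) e s := fun s hs => by
    obtain ⟨p, hp, hPd⟩ := hP s hs
    exact ⟨_, mul_nonpos_of_nonpos_of_nonneg (hv' s hs) (by linarith), hasDerivAt_energy hv2 hs hPd⟩
  refine antitoneOn_of_deriv_nonpos (convex_Icc α β) (continuousOn_energy hαβ hv1 hPc) ?_ ?_
  all_goals rw [interior_Icc]
  · exact fun s hs => (hd s hs).elim fun e he => he.2.differentiableAt.differentiableWithinAt
  · exact fun s hs => (hd s hs).elim fun e he => he.2.deriv ▸ he.1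

theorem energy_eq_zero (hαβ : α ≤ β)
    (hE : AntitoneOn (energy v P α β) (Icc α β)) (hv'α : derivWithin v (Icc α β) α = 0)
    (hPα : 0 ≤ P (v α)) (hPβ : P (v β) ≤ 0) : EqOn (energy v P α β) 0 (Icc α β) := by
  intro s hs
  have hle := hE (left_mem_Icc.2 hαβ) hs hs.1
  have hge := hE hs (right_mem_Icc.2 hαβ) hs.2
  simp only [energy, hv'α, Pi.zero_apply] at hle hge ⊢
  nlinarith [sq_nonneg (derivWithin v (Icc α β) β)]

end Energy

noncomputable def levelSpeedSq (u : ℝ → ℝ) (a b y : ℝ) : ℝ :=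
  derivWithin u (Icc a b) (invFunOn u (Icc a b) y) ^ 2

section LevelSpeed

variable {u : ℝ → ℝ} {a b : ℝ}

theorem continuousOn_levelSpeedSq (hab : a < b) (hu : ContDiffOn ℝ 1 u (Icc a b))
    (hmono : StrictMonoOn u (Icc a b)) : ContinuousOn (levelSpeedSq u a b) (Icc (u a) (u b)) :=
  ((hu.continuousOn_derivWithin (uniqueDiffOn_Icc hab) le_rfl).comp
    (hmono.continuousOn_invFunOn_Icc hab.le hu.continuousOn)
    (hmono.bijOn_Icc hab.le hu.continuousOn).surjOn.mapsTo_invFunOn).pow 2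

theorem hasDerivAt_levelSpeedSq (hab : a ≤ b) (hu1 : ContinuousOn u (Icc a b))
    (hu2 : ContDiffOn ℝ 2 u (Ioo a b)) (hmono : StrictMonoOn u (Icc a b))
    (hu' : ∀ t ∈ Ioo a b, 0 < deriv u t) {y : ℝ} (hy : y ∈ Ioo (u a) (u b)) :
    HasDerivAt (levelSpeedSq u a b) (2 * deriv (deriv u) (invFunOn u (Icc a b) y)) y := by
  have hφ := hmono.mapsTo_invFunOn_Ioo hab hu1
  have ht := hφ hy
  have hu'' : HasDerivAt (deriv u) (deriv (deriv u) _) _ :=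
    ((hu2.deriv_of_isOpen isOpen_Ioo (m := 1) (by norm_num)).contDiffAt
      (Ioo_mem_nhds ht.1 ht.2)).differentiableAt one_ne_zero |>.hasDerivAt
  have hφ' := hmono.hasDerivAt_invFunOn_Icc hab hu1 hy
    ((hu2.contDiffAt (Ioo_mem_nhds ht.1 ht.2)).differentiableAt (by norm_num)).hasDerivAt
    (hu' _ ht).ne'
  have heq : levelSpeedSq u a b =ᶠ[𝓝 y] fun z => deriv u (invFunOn u (Icc a b) z) ^ 2 := by
    filter_upwards [Ioo_mem_nhds hy.1 hy.2] with z hz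
    rw [levelSpeedSq, derivWithin_of_mem_nhds (Icc_mem_nhds (hφ hz).1 (hφ hz).2)]
  refine (((hu''.comp y hφ').pow 2).congr_of_eventuallyEq heq).congr_deriv ?_
  simp only [Function.comp_apply]
  field_simp [(hu' _ ht).ne']
  ring

theorem exists_hasDerivAt_levelSpeedSq_le {v : ℝ → ℝ} {α β : ℝ} (hab : a ≤ b)
    (hu1 : ContinuousOn u (Icc a b)) (hu2 : ContDiffOn ℝ 2 u (Ioo a b))
    (hmono : StrictMonoOn u (Icc a b)) (hu' : ∀ t ∈ Ioo a b, 0 < deriv u t)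
    (hv : MapsTo v (Ioo α β) (Ioo (u a) (u b)))
    (huv : ∀ t ∈ Ioo a b, ∀ s ∈ Ioo α β, u t = v s → deriv (deriv u) t ≤ deriv (deriv v) s) :
    ∀ s ∈ Ioo α β, ∃ p ≤ 2 * deriv (deriv v) s, HasDerivAt (levelSpeedSq u a b) p (v s) := by
  intro s hs
  have hcmp := huv _ (hmono.mapsTo_invFunOn_Ioo hab hu1 (hv hs)) s hs
    ((hmono.bijOn_Icc hab hu1).invOn_invFunOn.2 (Ioo_subset_Icc_self (hv hs)))
  exact ⟨_, by linarith, hasDerivAt_levelSpeedSq hab hu1 hu2 hmono hu' (hv hs)⟩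

theorem levelSpeedSq_pos (hab : a ≤ b) (hu1 : ContinuousOn u (Icc a b))
    (hmono : StrictMonoOn u (Icc a b)) (hu' : ∀ t ∈ Ioo a b, 0 < deriv u t) {y : ℝ}
    (hy : y ∈ Ioo (u a) (u b)) : 0 < levelSpeedSq u a b y := by
  have ht := hmono.mapsTo_invFunOn_Ioo hab hu1 hy
  rw [levelSpeedSq, derivWithin_of_mem_nhds (Icc_mem_nhds ht.1 ht.2)]
  exact pow_pos (hu' _ ht) 2

theorem eq_of_levelSpeedSq_eq_zero {y : ℝ} (hab : a ≤ b)
    (hu1 : ContinuousOn u (Icc a b)) (hmono : StrictMonoOn u (Icc a b))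
    (hu' : ∀ t ∈ Ioo a b, 0 < deriv u t) (hy : y ∈ Ioc (u a) (u b))
    (h0 : levelSpeedSq u a b y = 0) : y = u b :=
  hy.2.antisymm <| not_lt.1 fun hlt => (levelSpeedSq_pos hab hu1 hmono hu' ⟨hy.1, hlt⟩).ne' h0

theorem hasDerivAt_invFunOn_comp_of_sq_eq {v : ℝ → ℝ} {s v' : ℝ} (hab : a ≤ b)
    (hu1 : ContinuousOn u (Icc a b)) (hud : DifferentiableOn ℝ u (Ioo a b))
    (hmono : StrictMonoOn u (Icc a b)) (hu' : ∀ t ∈ Ioo a b, 0 < deriv u t)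
    (hv : HasDerivAt v v' s) (hv' : v' ≤ 0) (hvs : v s ∈ Ioo (u a) (u b))
    (hsq : v' ^ 2 = levelSpeedSq u a b (v s)) :
    HasDerivAt (fun x => invFunOn u (Icc a b) (v x)) (-1) s := by
  have ht := hmono.mapsTo_invFunOn_Ioo hab hu1 hvs
  have hpos := hu' _ ht
  rw [levelSpeedSq, derivWithin_of_mem_nhds (Icc_mem_nhds ht.1 ht.2)] at hsq
  have hv'eq : v' = -deriv u (invFunOn u (Icc a b) (v s)) := by nlinarith
  refine ((hmono.hasDerivAt_invFunOn_Icc hab hu1 hvs ((hud _ ht).differentiableAt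
    (Ioo_mem_nhds ht.1 ht.2)).hasDerivAt hpos.ne').comp s hv).congr_deriv ?_
  rw [hv'eq]
  field_simp

theorem invFunOn_comp_eq_sub {v : ℝ → ℝ} {α β : ℝ} (hab : a ≤ b)
    (hu1 : ContinuousOn u (Icc a b)) (hud : DifferentiableOn ℝ u (Ioo a b))
    (hmono : StrictMonoOn u (Icc a b)) (hu' : ∀ t ∈ Ioo a b, 0 < deriv u t)
    (hv1 : ContinuousOn v (Icc α β)) (hvd : DifferentiableOn ℝ v (Ioo α β))
    (hv' : ∀ s ∈ Ioo α β, deriv v s ≤ 0) (hvIcc : MapsTo v (Icc α β) (Icc (u a) (u b)))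
    (hvIoo : MapsTo v (Ioo α β) (Ioo (u a) (u b)))
    (hE : EqOn (energy v (levelSpeedSq u a b) α β) 0 (Icc α β)) {s : ℝ}
    (hs : s ∈ Icc α β) : invFunOn u (Icc a b) (v s) = invFunOn u (Icc a b) (v α) + α - s := by
  refine eq_sub_of_hasDerivAt_neg_one ((hmono.continuousOn_invFunOn_Icc hab hu1).comp hv1 hvIcc)
    (fun x hx => hasDerivAt_invFunOn_comp_of_sq_eq hab hu1 hud hmono hu'
      ((hvd x hx).differentiableAt (Ioo_mem_nhds hx.1 hx.2)).hasDerivAt (hv' x hx) (hvIoo hx) ?_) hs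
  simpa [energy, derivWithin_of_mem_nhds (Icc_mem_nhds hx.1 hx.2), sub_eq_zero] using
    hE (Ioo_subset_Icc_self hx)

end LevelSpeed

/-- Lemma 4.1 of Li–Nirenberg: v is a reflection of u. -/
theorem stmt_6 (a b α β : ℝ) (hab : a < b) (hαβ : α < β) (u v : ℝ → ℝ)
    (hu2 : ContDiffOn ℝ 2 u (Set.Ioo a b)) (hu1 : ContDiffOn ℝ 1 u (Set.Icc a b))
    (hu'a : derivWithin u (Set.Icc a b) a = 0)
    (hu' : ∀ t ∈ Set.Ioo a b, 0 < deriv u t)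
    (hv2 : ContDiffOn ℝ 2 v (Set.Ioo α β)) (hv1 : ContDiffOn ℝ 1 v (Set.Icc α β))
    (hvα : v α ≤ u b) (hvβ : v β = u a)
    (hvbet : ∀ s ∈ Set.Ioo α β, v β < v s ∧ v s < v α)
    (hv'α : derivWithin v (Set.Icc α β) α = 0)
    (hmain : ∀ t ∈ Set.Ioo a b, ∀ s ∈ Set.Ioo α β, u t = v s →
      deriv (deriv u) t ≤ deriv (deriv v) s) :
    β - α = b - a ∧ (∀ s ∈ Set.Icc α β, v s = u (b + α - s)) ∧ v α = u b := by
  have hmono : StrictMonoOn u (Icc a b) :=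
    strictMonoOn_of_deriv_pos (convex_Icc a b) hu1.continuousOn (by rwa [interior_Icc])
  have hinv := (hmono.bijOn_Icc hab.le hu1.continuousOn).invOn_invFunOn
  have hvβα : v β < v α := (hvbet ((α + β) / 2) ⟨by linarith, by linarith⟩).elim lt_trans
  have hvIoo : MapsTo v (Ioo α β) (Ioo (u a) (u b)) := fun s hs =>
    ⟨hvβ ▸ (hvbet s hs).1, (hvbet s hs).2.trans_le hvα⟩
  have hvIcc : MapsTo v (Icc α β) (Icc (u a) (u b)) :=
    (mapsTo_Icc_of_forall_mem_Ioo hαβ hvbet).mono_right (Icc_subset_Icc hvβ.ge hvα)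
  have hvd : DifferentiableOn ℝ v (Ioo α β) := hv2.differentiableOn (by norm_num)
  set P := levelSpeedSq u a b
  have hPc : ContinuousOn P (v '' Icc α β) :=
    (continuousOn_levelSpeedSq hab hu1 hmono).mono hvIcc.image_subset
  have hP := exists_hasDerivAt_levelSpeedSq_le hab.le hu1.continuousOn hu2 hmono hu' hvIoo hmain
  have hPβ : P (v β) = 0 := by simp [P, levelSpeedSq, hvβ, hinv.1 (left_mem_Icc.2 hab.le), hu'a]
  have hrec := Ioo_subset_records hαβ hv1 hv2 (fun s hs => (hvbet s hs).1) hPc hP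
    (fun s hs => levelSpeedSq_pos hab.le hu1.continuousOn hmono hu' (hvIoo hs)) hPβ.le
  have hv' : ∀ s ∈ Ioo α β, deriv v s ≤ 0 := fun s hs =>
    deriv_nonpos_of_mem_records hvd hs (hrec hs)
  have hE0 := energy_eq_zero hαβ.le (antitoneOn_energy hαβ hv1 hv2 hv' hPc hP) hv'α
    (sq_nonneg _) hPβ.le
  have hvαb : v α = u b := eq_of_levelSpeedSq_eq_zero hab.le hu1.continuousOn hmono hu'
    ⟨hvβ ▸ hvβα, hvα⟩ (by simpa [energy, hv'α] using hE0 (left_mem_Icc.2 hαβ.le))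
  have hτ : ∀ s ∈ Icc α β, invFunOn u (Icc a b) (v s) = b + α - s := fun s hs => by
    simpa [hvαb, hinv.1 (right_mem_Icc.2 hab.le)] using invFunOn_comp_eq_sub hab.le
      hu1.continuousOn (hu2.differentiableOn (by norm_num)) hmono hu' hv1.continuousOn hvd hv'
      hvIcc hvIoo hE0 hs
  refine ⟨?_, fun s hs => by rw [← hτ s hs, hinv.2 (hvIcc hs)], hvαb⟩
  have := hτ β (right_mem_Icc.2 hαβ.le)
  rw [hvβ, hinv.1 (left_mem_Icc.2 hab.le)] at this
  linarith
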